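/- arXiv:math/0103114 — 4 statements merged into one kernel-verified Lean document; each statement's English description precedes it below -/
import Mathlib

section
/- For any group G and any element g ∈ G, the commutator subgroup [⟨g⟩, ⟨g⟩^G] equals the iterated commutator subgroup [[G, ⟨g⟩], ⟨g⟩]. -/
/-!
Write `A = ⟨g⟩` and `C = [G, A]`, a normal subgroup. Since `x a x⁻¹ = [x, a] a`, the normal
closure of `A` is `C A`, so every element of `⟨g⟩^G` has the form `c b` with `c ∈ C`, `b ∈ A`.
As `A` is abelian, `[a, c b] = [a, c]` for `a ∈ A`, hence `[A, ⟨g⟩^G] = [A, C] = [C, A]`.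
-/

open scoped commutatorElement

namespace Subgroup

variable {G : Type*} [Group G]

instance commutator_top_left_normal (H : Subgroup G) : (⁅(⊤ : Subgroup G), H⁆).Normal :=
  normalizer_eq_top_iff.mp (top_le_iff.mp (normalizer_commutator_ge_left ⊤ H))

instance commutator_top_left_sup_normal (H : Subgroup G) :
    (⁅(⊤ : Subgroup G), H⁆ ⊔ H).Normal where
  conj_mem n hn x := by
    rw [← SetLike.mem_coe, normal_mul] at hn ⊢
    obtain ⟨c, hc, h, hh, rfl⟩ := hn
    have hconj : x * (c * h) * x⁻¹ = (x * c * x⁻¹ * ⁅x, h⁆) * h := by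
      simp only [commutatorElement_def]; group
    rw [hconj]
    exact Set.mul_mem_mul
      (mul_mem ((commutator_top_left_normal H).conj_mem c hc x)
        (commutator_mem_commutator (mem_top x) hh)) hh

theorem normalClosure_eq_commutator_top_left_sup (H : Subgroup G) :
    normalClosure (H : Set G) = ⁅(⊤ : Subgroup G), H⁆ ⊔ H := by
  refine le_antisymm (normalClosure_le_normal (le_sup_right : H ≤ _ ⊔ H))
    (sup_le ?_ le_normalClosure)
  calc ⁅(⊤ : Subgroup G), H⁆ ≤ ⁅⊤, normalClosure (H : Set G)⁆ :=
        commutator_mono le_rfl le_normalClosure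
    _ ≤ normalClosure (H : Set G) := commutator_le_right _ _

theorem commutator_normal_sup_eq_of_le_centralizer {H N K : Subgroup G} [N.Normal]
    (hK : K ≤ centralizer H) : ⁅H, N ⊔ K⁆ = ⁅H, N⁆ := by
  refine le_antisymm ?_ (commutator_mono le_rfl le_sup_left)
  rw [commutator_le]
  intro h hh x hx
  rw [← SetLike.mem_coe, normal_mul] at hx
  obtain ⟨n, hn, k, hk, rfl⟩ := hx
  have hcomm : Commute h⁻¹ k := Commute.inv_left (mem_centralizer_iff.mp (hK hk) h hh)
  have hdrop : ⁅h, n * k⁆ = ⁅h, n⁆ := calc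
    ⁅h, n * k⁆ = h * n * (k * h⁻¹) * k⁻¹ * n⁻¹ := by rw [commutatorElement_def]; group
    _ = ⁅h, n⁆ := by rw [← hcomm.eq, commutatorElement_def]; group
  rw [hdrop]
  exact commutator_mem_commutator hh hn

end Subgroup

/-- `[⟨g⟩, ⟨g⟩^G] = [[G, ⟨g⟩], ⟨g⟩]`. -/
theorem stmt2 {G : Type*} [Group G] (g : G) :
    ⁅Subgroup.zpowers g, Subgroup.normalClosure ((Subgroup.zpowers g : Subgroup G) : Set G)⁆ =
      ⁅⁅(⊤ : Subgroup G), Subgroup.zpowers g⁆, Subgroup.zpowers g⁆ := by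
  rw [Subgroup.normalClosure_eq_commutator_top_left_sup,
    Subgroup.commutator_normal_sup_eq_of_le_centralizer (Subgroup.le_centralizer _),
    Subgroup.commutator_comm]
end

section
/- Let G be a group and g ∈ G. Define subgroups A_n by A_1 = ⟨g⟩^G (the normal closure of ⟨g⟩ in G) and A_{n+1} = ⟨g⟩^{A_n} (the normal closure of ⟨g⟩ in A_n), and define D_n by D_1 = [G, ⟨g⟩] and D_{n+1} = [D_n, ⟨g⟩]. Then for every n ≥ 1, [⟨g⟩, A_n] = D_{n+1}. -/
/-- The normal closure of a subgroup `H` in a subgroup `K` (as a subgroup of `G`):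
the subgroup generated by all conjugates `k⁻¹*h*k`, `h ∈ H`, `k ∈ K`. -/
def nclIn {G : Type*} [Group G] (H K : Subgroup G) : Subgroup G :=
  Subgroup.closure {x | ∃ h ∈ H, ∃ k ∈ K, x = k⁻¹ * h * k}

/-!
Conjugating by `k` differs from the identity by a commutator, so the normal closure of `H` in
`K` is `H ⊔ ⁅H, K⁆`. When `H` is abelian and normalizes `L`, every commutator `⁅a, h * l⁆` with
`a, h ∈ H`, `l ∈ L` is the conjugate `h * ⁅a, l⁆ * h⁻¹`, so `⁅H, H ⊔ L⁆ = ⁅H, L⁆`. Applied to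
`H = ⟨g⟩` and `L = ⁅⟨g⟩, A n⁆`, this turns `⁅⟨g⟩, A (n + 1)⁆` into `⁅⁅⟨g⟩, A n⁆, ⟨g⟩⁆`, and
induction on `n` finishes the proof.
-/

namespace Subgroup

open scoped commutatorElement

variable {G : Type*} [Group G]

theorem nclIn_eq_sup_commutator (H K : Subgroup G) : nclIn H K = H ⊔ ⁅H, K⁆ := by
  apply le_antisymm
  · rw [nclIn, closure_le]
    rintro _ ⟨h, hh, k, hk, rfl⟩
    have hconj : k⁻¹ * h * k = h * ⁅h⁻¹, k⁻¹⁆ := by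
      simp only [commutatorElement_def]; group
    rw [SetLike.mem_coe, hconj]
    exact mul_mem_sup hh (commutator_mem_commutator (inv_mem hh) (inv_mem hk))
  · have hmem : ∀ h ∈ H, ∀ k ∈ K, k⁻¹ * h * k ∈ nclIn H K :=
      fun h hh k hk => subset_closure ⟨h, hh, k, hk, rfl⟩
    refine sup_le (fun h hh => by simpa using hmem h hh 1 (one_mem K)) ?_
    rw [commutator_le]
    intro h hh k hk
    have hcomm : ⁅h, k⁆ = (1⁻¹ * h * 1) * ((k⁻¹)⁻¹ * h⁻¹ * k⁻¹) := by
      simp only [commutatorElement_def]; group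
    rw [hcomm]
    exact mul_mem (hmem h hh 1 (one_mem K)) (hmem h⁻¹ (inv_mem hh) k⁻¹ (inv_mem hk))

theorem commutator_sup_right_eq_of_le_normalizer (H L : Subgroup G) [IsMulCommutative H]
    (hHL : H ≤ normalizer L) : ⁅H, H ⊔ L⁆ = ⁅H, L⁆ := by
  refine le_antisymm ?_ (commutator_mono le_rfl le_sup_right)
  rw [commutator_le]
  intro a ha x hx
  rw [← SetLike.mem_coe, coe_mul_of_left_le_normalizer_right H L hHL] at hx
  obtain ⟨h, hh, l, hl, rfl⟩ := hx
  have hah : ⁅a, h⁆ = 1 := by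
    simpa [commutator_self_eq_bot_iff.mpr ‹IsMulCommutative H›] using
      commutator_mem_commutator ha hh
  rw [commutatorElement_mul_right_eq_mul_conj, hah, one_mul]
  exact (mem_normalizer_iff.mp (normalizer_commutator_ge_left H L hh) _).mp
    (commutator_mem_commutator ha hl)

theorem commutator_nclIn_eq (H K : Subgroup G) [IsMulCommutative H] :
    ⁅H, nclIn H K⁆ = ⁅⁅H, K⁆, H⁆ := by
  rw [nclIn_eq_sup_commutator,
    commutator_sup_right_eq_of_le_normalizer _ _ (normalizer_commutator_ge_left H K),
    commutator_comm]

end Subgroup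

/-- Chan Van Hao's lemma: with `A 1 = ⟨g⟩^G`, `A (n+1) = ⟨g⟩^(A n)`,
`D 1 = [G,⟨g⟩]`, `D (n+1) = [D n, ⟨g⟩]`, we have `[⟨g⟩, A n] = D (n+1)` for `n ≥ 1`. -/
theorem stmt3 {G : Type*} [Group G] (g : G) (A D : ℕ → Subgroup G)
    (hA1 : A 1 = nclIn (Subgroup.zpowers g) ⊤)
    (hA : ∀ n ≥ 1, A (n + 1) = nclIn (Subgroup.zpowers g) (A n))
    (hD1 : D 1 = ⁅(⊤ : Subgroup G), Subgroup.zpowers g⁆)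
    (hD : ∀ n ≥ 1, D (n + 1) = ⁅D n, Subgroup.zpowers g⁆) :
    ∀ n ≥ 1, ⁅Subgroup.zpowers g, A n⁆ = D (n + 1) := by
  intro n hn
  induction n, hn using Nat.le_induction with
  | base =>
    rw [hA1, Subgroup.commutator_nclIn_eq, Subgroup.commutator_comm _ ⊤, ← hD1, hD 1 le_rfl]
  | succ n hn ih =>
    rw [hA n hn, Subgroup.commutator_nclIn_eq, ih, hD (n + 1) (by omega)]
end

section
/- Let G be a group, g ∈ G, and define A_n and D_n as follows: A_1 = ⟨g⟩^G, A_{n+1} = ⟨g⟩^{A_n}; D_1 = [G,⟨g⟩], D_{n+1} = [D_n,⟨g⟩]. Then for every k ≥ 1, every a ∈ A_k, and every integer m, the commutator [a, g^m] lies in D_{k+1}. -/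
/-!
Write `Z = ⟨g⟩`. Each `D k` is a commutator subgroup `⁅_, Z⁆`, hence normalized by `Z`, and
by induction `A k ≤ Z ⊔ D k`: a conjugate `k⁻¹ h k` of `h ∈ Z` is `h` times a commutator in
`⁅A k, Z⁆`, and because `Z` is abelian and normalizes `E`, every `⁅z e, b⁆` with `z, b ∈ Z`,
`e ∈ E` is the `z`-conjugate of `⁅e, b⁆`, so `⁅Z ⊔ E, Z⁆ ≤ ⁅E, Z⁆`. Applied to `E = D k` this
also puts `⁅a, g ^ m⁆` into `⁅D k, Z⁆ = D (k + 1)`.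
-/

open Subgroup
open scoped commutatorElement

section

variable {G : Type*} [Group G]

theorem nclIn_le_sup_commutator (H K : Subgroup G) : nclIn H K ≤ H ⊔ ⁅K, H⁆ := by
  refine closure_le _ |>.mpr ?_
  rintro _ ⟨h, hh, k, hk, rfl⟩
  have hconj : k⁻¹ * h * k = h * ⁅h⁻¹, k⁻¹⁆ := by simp only [commutatorElement_def]; group
  rw [SetLike.mem_coe, hconj, commutator_comm]
  exact mul_mem (mem_sup_left hh)
    (mem_sup_right (commutator_mem_commutator (inv_mem hh) (inv_mem hk)))

theorem commutator_sup_le_of_le_normalizer (H E : Subgroup G) [IsMulCommutative H]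
    (hH : H ≤ normalizer (E : Set G)) : ⁅H ⊔ E, H⁆ ≤ ⁅E, H⁆ := by
  refine commutator_le.mpr fun x hx b hb => ?_
  rw [← SetLike.mem_coe, coe_mul_of_left_le_normalizer_right H E hH] at hx
  obtain ⟨z, hz, e, he, rfl⟩ := hx
  have hzb : z⁻¹ * b⁻¹ = b⁻¹ * z⁻¹ := by
    rw [← mul_inv_rev, ← mul_inv_rev, setLike_mul_comm hz hb]
  have hconj : ⁅z * e, b⁆ = z * ⁅e, b⁆ * z⁻¹ := by
    simp only [commutatorElement_def, mul_inv_rev, mul_assoc, hzb]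
  rw [hconj]
  exact (mem_normalizer_iff.mp (normalizer_commutator_ge_right E H hz) _).mp
    (commutator_mem_commutator he hb)

theorem nclIn_le_sup_commutator_of_le_sup (H B E : Subgroup G) [IsMulCommutative H]
    (hH : H ≤ normalizer (E : Set G)) (hB : B ≤ H ⊔ E) : nclIn H B ≤ H ⊔ ⁅E, H⁆ :=
  calc nclIn H B ≤ H ⊔ ⁅B, H⁆ := nclIn_le_sup_commutator H B
    _ ≤ H ⊔ ⁅H ⊔ E, H⁆ := sup_le_sup_left (commutator_mono hB le_rfl) H
    _ ≤ H ⊔ ⁅E, H⁆ := sup_le_sup_left (commutator_sup_le_of_le_normalizer H E hH) H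

end

/-- For `a ∈ A k` and `m ∈ ℤ`, the commutator `[a, g^m] = a⁻¹*(g^m)⁻¹*a*g^m` lies in `D (k+1)`. -/
theorem stmt5 {G : Type*} [Group G] (g : G) (A D : ℕ → Subgroup G)
    (hA1 : A 1 = nclIn (Subgroup.zpowers g) ⊤)
    (hA : ∀ n ≥ 1, A (n + 1) = nclIn (Subgroup.zpowers g) (A n))
    (hD1 : D 1 = ⁅(⊤ : Subgroup G), Subgroup.zpowers g⁆)
    (hD : ∀ n ≥ 1, D (n + 1) = ⁅D n, Subgroup.zpowers g⁆) :
    ∀ k ≥ 1, ∀ a ∈ A k, ∀ m : ℤ,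
      a⁻¹ * (g ^ m)⁻¹ * a * g ^ m ∈ D (k + 1) := by
  set Z := zpowers g
  have hD_normalized : ∀ k ≥ 1, Z ≤ normalizer (D k : Set G) := by
    intro k hk
    induction k, hk using Nat.le_induction with
    | base => rw [hD1]; exact normalizer_commutator_ge_right _ _
    | succ n hn _ => rw [hD n hn]; exact normalizer_commutator_ge_right _ _
  have hA_le : ∀ k ≥ 1, A k ≤ Z ⊔ D k := by
    intro k hk
    induction k, hk using Nat.le_induction with
    | base => rw [hA1, hD1]; exact nclIn_le_sup_commutator Z ⊤
    | succ n hn ih =>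
      rw [hA n hn, hD n hn]
      exact nclIn_le_sup_commutator_of_le_sup Z (A n) (D n) (hD_normalized n hn) ih
  intro k hk a ha m
  have hcomm : a⁻¹ * (g ^ m)⁻¹ * a * g ^ m = ⁅a⁻¹, (g ^ m)⁻¹⁆ := by
    simp only [commutatorElement_def, inv_inv]
  rw [hcomm, hD k hk]
  exact commutator_sup_le_of_le_normalizer Z (D k) (hD_normalized k hk)
    (commutator_mem_commutator (inv_mem (hA_le k hk ha)) (inv_mem (zpow_mem_zpowers g m)))
end

section
/- Let G be a group, m ∈ G, and k ≥ 0. Define A_0 = G, A_1 = ⟨m⟩^G, A_{n+1} = ⟨m⟩^{A_n}. Then for every x ∈ A_k, the commutator [m, x⁻¹mx] lies in γ_{k+3}(G), the (k+3)-rd term of the lower central series of G. -/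
open scoped commutatorElement

namespace Subgroup

variable {G : Type*} [Group G]

theorem commutatorElement_mem_iff_commute_mk {M : Subgroup G} [M.Normal] {a b : G} :
    ⁅a, b⁆ ∈ M ↔ Commute (a : G ⧸ M) (b : G ⧸ M) := by
  rw [← QuotientGroup.eq_one_iff, ← commutatorElement_eq_one_iff_commute]
  exact Iff.rfl

theorem commutator_closure_le {H M : Subgroup G} [M.Normal] {S : Set G}
    (hS : ∀ a ∈ H, ∀ s ∈ S, ⁅a, s⁆ ∈ M) : ⁅H, closure S⁆ ≤ M := by
  refine commutator_le.mpr fun a ha g hg => ?_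
  have hle : closure S ≤ (centralizer {(a : G ⧸ M)}).comap (QuotientGroup.mk' M) :=
    (closure_le _).mpr fun s hs =>
      mem_centralizer_singleton_iff.mpr (commutatorElement_mem_iff_commute_mk.mp (hS a ha s hs)).symm
  exact commutatorElement_mem_iff_commute_mk.mpr (mem_centralizer_singleton_iff.mp (hle hg)).symm

/-- Conjugating `h ∈ H` by `k` gives `h * ⁅h⁻¹, k⁻¹⁆`; modulo `M` the second factor is central and
the first commutes with `H`. -/
theorem commutator_nclIn_le {H K N M : Subgroup G} [IsMulCommutative H] [M.Normal]
    (hK : ⁅H, K⁆ ≤ N) (hN : ⁅N, ⊤⁆ ≤ M) : ⁅H, nclIn H K⁆ ≤ M := by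
  refine commutator_closure_le ?_
  rintro a ha _ ⟨h, hh, k, hk, rfl⟩
  have hconj : k⁻¹ * h * k = h * (⁅h⁻¹, k⁻¹⁆ : G) := by
    simp only [commutatorElement_def, inv_inv, ← mul_assoc, mul_inv_cancel, one_mul]
  have hcentral : Commute (a : G ⧸ M) (⁅h⁻¹, k⁻¹⁆ : G) :=
    (commutatorElement_mem_iff_commute_mk.mp <|
      hN <| commutator_mem_commutator (hK <| commutator_mem_commutator (inv_mem hh) (inv_mem hk))
        (mem_top a)).symm
  rw [commutatorElement_mem_iff_commute_mk, hconj, QuotientGroup.mk_mul]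
  exact (Commute.map (setLike_mul_comm ha hh) (QuotientGroup.mk' M)).mul_right hcentral

theorem commutator_le_lowerCentralSeries_of_nclIn {H : Subgroup G} [IsMulCommutative H]
    {A : ℕ → Subgroup G} (hA0 : A 0 = ⊤) (hA : ∀ n, A (n + 1) = nclIn H (A n)) (k : ℕ) :
    ⁅H, A k⁆ ≤ (⊤ : Subgroup G).lowerCentralSeries (k + 1) := by
  induction k with
  | zero => rw [hA0]; exact commutator_mono le_top le_rfl
  | succ k ih => rw [hA]; exact commutator_nclIn_le ih le_rfl

end Subgroup

/-- `lowerCentralSeries ⊤ n` is `γ_{n+1}(G)`, and the element on the left is `⁅m⁻¹, (x⁻¹ * m * x)⁻¹⁆`,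
with `x⁻¹ * m * x ∈ A (k + 1)`. -/
theorem stmt10 {G : Type*} [Group G] (m : G) (A : ℕ → Subgroup G)
    (hA0 : A 0 = ⊤)
    (hA1 : A 1 = nclIn (Subgroup.zpowers m) ⊤)
    (hA : ∀ n ≥ 1, A (n + 1) = nclIn (Subgroup.zpowers m) (A n)) :
    ∀ k : ℕ, ∀ x ∈ A k,
      m⁻¹ * (x⁻¹ * m * x)⁻¹ * m * (x⁻¹ * m * x) ∈ (⊤ : Subgroup G).lowerCentralSeries (k + 2) := by
  have hrec : ∀ n, A (n + 1) = nclIn (Subgroup.zpowers m) (A n)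
    | 0 => by rw [hA1, hA0]
    | n + 1 => hA (n + 1) (Nat.le_add_left 1 n)
  intro k x hx
  have hconj : x⁻¹ * m * x ∈ A (k + 1) :=
    hrec k ▸ Subgroup.subset_closure ⟨m, Subgroup.mem_zpowers m, x, hx, rfl⟩
  have hmem := Subgroup.commutator_le.mp
    (Subgroup.commutator_le_lowerCentralSeries_of_nclIn hA0 hrec (k + 1))
    m⁻¹ (inv_mem (Subgroup.mem_zpowers m)) _ (inv_mem hconj)
  simpa only [commutatorElement_def, inv_inv] using hmem
end
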